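/- Let P₀ = (X, a₀), Q₀ = (Y, b₀), R₀ = (Z, c₀) be points in the upper half-plane with u = |X−Y|, v = |Y−Z|, such that u² + b₀² = a₀² and v² + b₀² = c₀². Define for τ ≥ 0 the angle θ(τ) at Q_τ = (Y, sqrt(b₀²+τ²)) between the circular geodesic arcs from Q_τ to P_τ = (X, sqrt(a₀²+τ²)) and from Q_τ to R_τ = (Z, sqrt(c₀²+τ²)). Then θ(τ) → π as τ → ∞. -/

import Mathlib

open InnerProductGeometry

/-- A vector in the Euclidean plane. -/
noncomputable def vec2 (x y : ℝ) : EuclideanSpace ℝ (Fin 2) := WithLp.toLp 2 ![x, y]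

lemma lim_aux (p q : ℝ) :
    Filter.Tendsto
      (fun w : ℝ => (p * q - w) / (Real.sqrt (w + p ^ 2) * Real.sqrt (w + q ^ 2)))
      Filter.atTop (nhds (-1)) := by
  have hnum : Filter.Tendsto (fun w : ℝ => p * q / w - 1) Filter.atTop (nhds (0 - 1)) :=
    (tendsto_const_nhds.div_atTop Filter.tendsto_id).sub tendsto_const_nhds
  have hs : ∀ r : ℝ, Filter.Tendsto (fun w : ℝ => Real.sqrt (1 + r / w))
      Filter.atTop (nhds 1) := by
    intro r
    have h1 : Filter.Tendsto (fun w : ℝ => 1 + r / w) Filter.atTop (nhds (1 + 0)) :=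
      tendsto_const_nhds.add (tendsto_const_nhds.div_atTop Filter.tendsto_id)
    have := (Real.continuous_sqrt.continuousAt (x := (1:ℝ))).tendsto.comp (by simpa using h1)
    simpa [Real.sqrt_one, Function.comp_def] using this
  have hden : Filter.Tendsto
      (fun w : ℝ => Real.sqrt (1 + p ^ 2 / w) * Real.sqrt (1 + q ^ 2 / w))
      Filter.atTop (nhds (1 * 1)) := (hs (p ^ 2)).mul (hs (q ^ 2))
  have hmain : Filter.Tendsto
      (fun w : ℝ => (p * q / w - 1) /
        (Real.sqrt (1 + p ^ 2 / w) * Real.sqrt (1 + q ^ 2 / w)))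
      Filter.atTop (nhds ((0 - 1) / (1 * 1))) := hnum.div hden (by norm_num)
  have heq : ∀ᶠ w : ℝ in Filter.atTop,
      (p * q / w - 1) / (Real.sqrt (1 + p ^ 2 / w) * Real.sqrt (1 + q ^ 2 / w)) =
      (p * q - w) / (Real.sqrt (w + p ^ 2) * Real.sqrt (w + q ^ 2)) := by
    filter_upwards [Filter.eventually_ge_atTop (1 : ℝ)] with w hw
    have hw0 : (0:ℝ) < w := lt_of_lt_of_le one_pos hw
    have h1 : Real.sqrt (w + p ^ 2) = Real.sqrt w * Real.sqrt (1 + p ^ 2 / w) := by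
      rw [← Real.sqrt_mul hw0.le]
      congr 1
      field_simp
    have h2 : Real.sqrt (w + q ^ 2) = Real.sqrt w * Real.sqrt (1 + q ^ 2 / w) := by
      rw [← Real.sqrt_mul hw0.le]
      congr 1
      field_simp
    have h3 : p * q - w = w * (p * q / w - 1) := by field_simp
    rw [h1, h2, h3]
    rw [show Real.sqrt w * Real.sqrt (1 + p ^ 2 / w) * (Real.sqrt w * Real.sqrt (1 + q ^ 2 / w))
        = w * (Real.sqrt (1 + p ^ 2 / w) * Real.sqrt (1 + q ^ 2 / w)) by
      rw [show Real.sqrt w * Real.sqrt (1 + p ^ 2 / w) * (Real.sqrt w * Real.sqrt (1 + q ^ 2 / w))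
          = (Real.sqrt w * Real.sqrt w) * (Real.sqrt (1 + p ^ 2 / w) * Real.sqrt (1 + q ^ 2 / w))
          by ring, Real.mul_self_sqrt hw0.le]]
    rw [mul_div_mul_left _ _ hw0.ne']
  have := hmain.congr' heq
  norm_num at this
  exact this

theorem angle_tends_to_pi (X Y Z a₀ b₀ c₀ u v : ℝ)
    (hb : 0 < b₀) (hXY : X < Y) (hYZ : Y < Z) (hu : u = Y - X) (hv : v = Z - Y)
    (h1 : u ^ 2 + b₀ ^ 2 = a₀ ^ 2) (h2 : v ^ 2 + b₀ ^ 2 = c₀ ^ 2) :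
    -- θ(τ) is the Euclidean angle at Q_τ = (Y, sqrt(b₀²+τ²)) between the tangent
    -- vector to the circular geodesic arc towards P_τ (the circle centered at (X,0))
    -- and the tangent vector to the arc towards R_τ (the circle centered at (Z,0)).
    Filter.Tendsto
      (fun τ : ℝ =>
        angle (vec2 (-(Real.sqrt (b₀ ^ 2 + τ ^ 2))) (Y - X))
              (vec2 (Real.sqrt (b₀ ^ 2 + τ ^ 2)) (Z - Y)))
      Filter.atTop (nhds Real.pi) := by
  set p : ℝ := Y - X
  set q : ℝ := Z - Y
  -- rewrite the angle as arccos of the explicit quotient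
  have key : ∀ τ : ℝ,
      angle (vec2 (-(Real.sqrt (b₀ ^ 2 + τ ^ 2))) p)
            (vec2 (Real.sqrt (b₀ ^ 2 + τ ^ 2)) q) =
      Real.arccos ((p * q - (b₀ ^ 2 + τ ^ 2)) /
        (Real.sqrt ((b₀ ^ 2 + τ ^ 2) + p ^ 2) * Real.sqrt ((b₀ ^ 2 + τ ^ 2) + q ^ 2))) := by
    intro τ
    have hw : (0:ℝ) ≤ b₀ ^ 2 + τ ^ 2 := by positivity
    have hss : Real.sqrt (b₀ ^ 2 + τ ^ 2) * Real.sqrt (b₀ ^ 2 + τ ^ 2) = b₀ ^ 2 + τ ^ 2 :=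
      Real.mul_self_sqrt hw
    rw [angle]
    congr 1
    have hinner : (inner ℝ (vec2 (-(Real.sqrt (b₀ ^ 2 + τ ^ 2))) p)
        (vec2 (Real.sqrt (b₀ ^ 2 + τ ^ 2)) q) : ℝ) = p * q - (b₀ ^ 2 + τ ^ 2) := by
      simp only [vec2, PiLp.inner_apply, WithLp.ofLp_toLp, RCLike.inner_apply, conj_trivial, Fin.sum_univ_two,
        Matrix.cons_val_zero, Matrix.cons_val_one, Matrix.head_cons]
      nlinarith [hss]
    have hn1 : ‖vec2 (-(Real.sqrt (b₀ ^ 2 + τ ^ 2))) p‖ =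
        Real.sqrt ((b₀ ^ 2 + τ ^ 2) + p ^ 2) := by
      rw [vec2, EuclideanSpace.norm_eq]
      congr 1
      simp [Fin.sum_univ_two, sq_abs]
      nlinarith [hss]
    have hn2 : ‖vec2 (Real.sqrt (b₀ ^ 2 + τ ^ 2)) q‖ =
        Real.sqrt ((b₀ ^ 2 + τ ^ 2) + q ^ 2) := by
      rw [vec2, EuclideanSpace.norm_eq]
      congr 1
      simp [Fin.sum_univ_two, sq_abs]
      nlinarith [hss]
    rw [hinner, hn1, hn2]
  simp only [key]
  have hw : Filter.Tendsto (fun τ : ℝ => b₀ ^ 2 + τ ^ 2) Filter.atTop Filter.atTop := by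
    apply Filter.tendsto_atTop_add_const_left
    exact Filter.tendsto_pow_atTop (by norm_num)
  have hlim := (lim_aux p q).comp hw
  have harccos := (Real.continuous_arccos.continuousAt (x := (-1:ℝ))).tendsto.comp hlim
  simpa [Function.comp_def, Real.arccos_neg_one] using harccos
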